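/- Zeroth order homogenization of the derivative (Lemma 1, second part). For every M > 0 and T₀ > 0 there exist constants C > 0 and ε₀ > 0, depending only on l, A, X, Λ, g, c, δ, M and T₀, such that the following holds for every ε ∈ (0, ε₀]: if (U, B) is a bounded C² classical solution of the system on ℝ × [0, T₀/ε] whose partial derivatives up to order two are bounded in absolute value by M, and if (i) sup_{x∈ℝ} |A U_x(x,0) + g B_x(x,0)| ≤ M ε, (ii) sup_{x∈ℝ} |A U_{xx}(x,0) + g B_{xx}(x,0)| ≤ M ε, and (iii) B₀ := B(·,0) lies in W^{2,∞}(ℝ) with ‖B₀‖_{W^{2,∞}} ≤ M, then sup_{x∈ℝ, 0 ≤ t ≤ T₀/ε} |B_x(x,t) − B₀′(x − λ_B^{(0)} ε t)| ≤ C ε. -/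

import Mathlib

/-!
Put `v = ε λ_B` and choose a row vector `ρ` with `ρ (v - A) = cᵀ A⁻¹`; since `A` is invertible,
such `ρ` exist and are uniformly bounded for all small `v`. Differentiating the system in `x` gives
`U_xt = -(A U_xx + B_xx g)` and `B_xt = -ε cᵀ U_xx`, and with these the corrected slope
`B_x + ε ρ (A U_x + B_x g)` has derivative `-ε² (cᵀ U_xx) (ρ g)` along the characteristic
`x = x₀ + v s`: the choice of `ρ` cancels every term of order `ε`. Over the time span `T₀/ε` the
corrected slope thus moves by `O(ε)`, and the corrector itself is `O(ε)`.
-/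

open Matrix Set

section PartialDerivatives

variable {E : Type*} [NormedAddCommGroup E] [NormedSpace ℝ E] {T : ℝ}

theorem HasFDerivWithinAt.hasDerivAt_fst_slice {G : ℝ × ℝ → E} {D : (ℝ × ℝ) →L[ℝ] E}
    {x t : ℝ} (hD : HasFDerivWithinAt G D (univ ×ˢ Icc 0 T) (x, t)) (ht : t ∈ Icc 0 T) :
    HasDerivAt (fun x' => G (x', t)) (D (1, 0)) x :=
  hasDerivWithinAt_univ.mp <| hD.comp_hasDerivWithinAt (f := fun x' => (x', t)) x
    ((hasDerivAt_id x).prodMk (hasDerivAt_const x t)).hasDerivWithinAt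
    fun _ _ => ⟨mem_univ _, ht⟩

theorem HasFDerivWithinAt.hasDerivWithinAt_snd_slice {G : ℝ × ℝ → E} {D : (ℝ × ℝ) →L[ℝ] E}
    {x t : ℝ} (hD : HasFDerivWithinAt G D (univ ×ˢ Icc 0 T) (x, t)) :
    HasDerivWithinAt (fun t' => G (x, t')) (D (0, 1)) (Icc 0 T) t :=
  hD.comp_hasDerivWithinAt t ((hasDerivAt_const t x).prodMk (hasDerivAt_id t)).hasDerivWithinAt
    fun _ ht' => ⟨mem_univ _, ht'⟩

theorem HasFDerivWithinAt.hasDerivWithinAt_line {G : ℝ × ℝ → E} {D : (ℝ × ℝ) →L[ℝ] E}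
    {x₀ v s : ℝ} (hD : HasFDerivWithinAt G D (univ ×ˢ Icc 0 T) (x₀ + v * s, s)) :
    HasDerivWithinAt (fun s' => G (x₀ + v * s', s')) (D (v, 1)) (Icc 0 T) s := by
  have hline : HasDerivAt (fun s' => x₀ + v * s') v s := by
    simpa using ((hasDerivAt_id s).const_mul v).const_add x₀
  exact hD.comp_hasDerivWithinAt (f := fun s' => (x₀ + v * s', s')) s
    (hline.prodMk (hasDerivAt_id s)).hasDerivWithinAt fun _ hs' => ⟨mem_univ _, hs'⟩

variable {f fx ft fxx fxt : ℝ → ℝ → E}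

theorem exists_hasFDerivWithinAt_partials_of_contDiffOn (hT : 0 < T)
    (hf : ContDiffOn ℝ 2 (fun p : ℝ × ℝ => f p.1 p.2) (univ ×ˢ Icc 0 T))
    (hfx : ∀ x, ∀ t ∈ Icc 0 T, HasDerivAt (fun x' => f x' t) (fx x t) x)
    (hft : ∀ x, ∀ t ∈ Icc 0 T, HasDerivWithinAt (fun t' => f x t') (ft x t) (Icc 0 T) t) :
    ∃ Dx Dt : ℝ × ℝ → (ℝ × ℝ) →L[ℝ] E, ∀ x, ∀ t ∈ Icc 0 T,
      HasFDerivWithinAt (fun p : ℝ × ℝ => fx p.1 p.2) (Dx (x, t)) (univ ×ˢ Icc 0 T) (x, t) ∧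
      HasFDerivWithinAt (fun p : ℝ × ℝ => ft p.1 p.2) (Dt (x, t)) (univ ×ˢ Icc 0 T) (x, t) ∧
      Dt (x, t) (1, 0) = Dx (x, t) (0, 1) := by
  set S : Set (ℝ × ℝ) := univ ×ˢ Icc 0 T
  set F' := fderivWithin ℝ (fun p : ℝ × ℝ => f p.1 p.2) S
  have hint : interior S = univ ×ˢ Ioo 0 T := by
    rw [interior_prod_eq, interior_univ, interior_Icc]
  have hUD : UniqueDiffOn ℝ S := uniqueDiffOn_convex (convex_univ.prod (convex_Icc 0 T))
    (by rw [hint]; exact ⟨(0, T / 2), mem_univ _, by constructor <;> linarith⟩)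
  have hF' : ∀ p ∈ S, HasFDerivWithinAt _ (F' p) S p :=
    fun p hp => ((hf.differentiableOn (by norm_num)) p hp).hasFDerivWithinAt
  have hF'' : ∀ p ∈ S, HasFDerivWithinAt F' (fderivWithin ℝ F' S p) S p :=
    fun p hp => (((hf.fderivWithin hUD (m := 1) (by norm_num)).differentiableOn
      (by norm_num)) p hp).hasFDerivWithinAt
  have hF'x : ∀ p ∈ S, F' p (1, 0) = fx p.1 p.2 := fun p hp =>
    ((hF' p hp).hasDerivAt_fst_slice hp.2).unique (hfx p.1 p.2 hp.2)
  have hF't : ∀ p ∈ S, F' p (0, 1) = ft p.1 p.2 := fun p hp =>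
    (uniqueDiffOn_Icc hT p.2 hp.2).eq_deriv _ (hF' p hp).hasDerivWithinAt_snd_slice
      (hft p.1 p.2 hp.2)
  refine ⟨fun p => (ContinuousLinearMap.apply ℝ E (1, 0)).comp (fderivWithin ℝ F' S p),
    fun p => (ContinuousLinearMap.apply ℝ E (0, 1)).comp (fderivWithin ℝ F' S p),
    fun x t ht => ⟨?_, ?_, ?_⟩⟩
  · have h := (ContinuousLinearMap.apply ℝ E (1, 0)).hasFDerivAt.comp_hasFDerivWithinAt (x, t)
      (hF'' _ ⟨mem_univ _, ht⟩)
    exact h.congr (fun p hp => (hF'x p hp).symm) (hF'x _ ⟨mem_univ _, ht⟩).symm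
  · have h := (ContinuousLinearMap.apply ℝ E (0, 1)).hasFDerivAt.comp_hasFDerivWithinAt (x, t)
      (hF'' _ ⟨mem_univ _, ht⟩)
    exact h.congr (fun p hp => (hF't p hp).symm) (hF't _ ⟨mem_univ _, ht⟩).symm
  · have hcl : (x, t) ∈ closure (interior S) := by
      rw [hint, closure_prod_eq, closure_univ, closure_Ioo hT.ne]
      exact ⟨mem_univ _, ht⟩
    exact ((hf.contDiffWithinAt ⟨mem_univ _, ht⟩).isSymmSndFDerivWithinAt (by simp) hUD hcl
      ⟨mem_univ _, ht⟩).eq _ _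

theorem hasDerivWithinAt_line_of_contDiffOn (hT : 0 < T)
    (hf : ContDiffOn ℝ 2 (fun p : ℝ × ℝ => f p.1 p.2) (univ ×ˢ Icc 0 T))
    (hfx : ∀ x, ∀ t ∈ Icc 0 T, HasDerivAt (fun x' => f x' t) (fx x t) x)
    (hft : ∀ x, ∀ t ∈ Icc 0 T, HasDerivWithinAt (fun t' => f x t') (ft x t) (Icc 0 T) t)
    (hfxx : ∀ x, ∀ t ∈ Icc 0 T, HasDerivAt (fun x' => fx x' t) (fxx x t) x)
    (hfxt : ∀ x, ∀ t ∈ Icc 0 T, HasDerivWithinAt (fun t' => fx x t') (fxt x t) (Icc 0 T) t)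
    (x₀ v : ℝ) {s : ℝ} (hs : s ∈ Icc 0 T) :
    HasDerivWithinAt (fun s' => fx (x₀ + v * s') s')
      (v • fxx (x₀ + v * s) s + fxt (x₀ + v * s) s) (Icc 0 T) s := by
  obtain ⟨Dx, _, hD⟩ := exists_hasFDerivWithinAt_partials_of_contDiffOn hT hf hfx hft
  have hDx := (hD (x₀ + v * s) s hs).1
  have hxx : Dx (x₀ + v * s, s) (1, 0) = fxx (x₀ + v * s) s :=
    (hDx.hasDerivAt_fst_slice hs).unique (hfxx _ _ hs)
  have hxt : Dx (x₀ + v * s, s) (0, 1) = fxt (x₀ + v * s) s :=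
    (uniqueDiffOn_Icc hT s hs).eq_deriv _ hDx.hasDerivWithinAt_snd_slice (hfxt _ _ hs)
  have hdir : ((v, 1) : ℝ × ℝ) = v • (1, 0) + (0, 1) := by ext <;> simp
  simpa only [hdir, map_add, map_smul, hxx, hxt] using hDx.hasDerivWithinAt_line

theorem hasDerivAt_mixed_of_contDiffOn (hT : 0 < T)
    (hf : ContDiffOn ℝ 2 (fun p : ℝ × ℝ => f p.1 p.2) (univ ×ˢ Icc 0 T))
    (hfx : ∀ x, ∀ t ∈ Icc 0 T, HasDerivAt (fun x' => f x' t) (fx x t) x)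
    (hft : ∀ x, ∀ t ∈ Icc 0 T, HasDerivWithinAt (fun t' => f x t') (ft x t) (Icc 0 T) t)
    (hfxt : ∀ x, ∀ t ∈ Icc 0 T, HasDerivWithinAt (fun t' => fx x t') (fxt x t) (Icc 0 T) t)
    {x t : ℝ} (ht : t ∈ Icc 0 T) :
    HasDerivAt (fun x' => ft x' t) (fxt x t) x := by
  obtain ⟨Dx, Dt, hD⟩ := exists_hasFDerivWithinAt_partials_of_contDiffOn hT hf hfx hft
  obtain ⟨hDx, hDt, hsymm⟩ := hD x t ht
  have hxt : Dx (x, t) (0, 1) = fxt x t :=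
    (uniqueDiffOn_Icc hT t ht).eq_deriv _ hDx.hasDerivWithinAt_snd_slice (hfxt _ _ ht)
  simpa only [hsymm, hxt] using hDt.hasDerivAt_fst_slice ht

end PartialDerivatives

theorem abs_sub_le_of_hasDerivWithinAt_add_corrector {f w f' : ℝ → ℝ} {T ε K₁ K₂ : ℝ}
    (hε : 0 ≤ ε)
    (hder : ∀ s ∈ Icc 0 T, HasDerivWithinAt (fun s => f s + ε * w s) (f' s) (Icc 0 T) s)
    (hf' : ∀ s ∈ Icc 0 T, |f' s| ≤ K₁) (hw : ∀ s ∈ Icc 0 T, |w s| ≤ K₂)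
    {t : ℝ} (ht : t ∈ Icc 0 T) :
    |f t - f 0| ≤ K₁ * t + 2 * ε * K₂ := by
  have hmvt := norm_image_sub_le_of_norm_deriv_le_segment' hder
    (fun s hs => hf' s (Ico_subset_Icc_self hs)) t ht
  have hwt : |ε * w t| ≤ ε * K₂ := by
    rw [abs_mul, abs_of_nonneg hε]
    exact mul_le_mul_of_nonneg_left (hw t ht) hε
  have hw0 : |ε * w 0| ≤ ε * K₂ := by
    rw [abs_mul, abs_of_nonneg hε]
    exact mul_le_mul_of_nonneg_left (hw 0 ⟨le_rfl, ht.1.trans ht.2⟩) hε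
  rw [Real.norm_eq_abs, sub_zero] at hmvt
  rw [abs_le] at hmvt hwt hw0 ⊢
  constructor <;> linarith

section DotProduct

variable {m n : Type*} [Fintype n] {u : ℝ → n → ℝ} {u' : n → ℝ} {s : Set ℝ} {x : ℝ}

theorem HasDerivWithinAt.const_dotProduct (w : n → ℝ) (h : HasDerivWithinAt u u' s x) :
    HasDerivWithinAt (fun y => w ⬝ᵥ u y) (w ⬝ᵥ u') s x :=
  HasDerivWithinAt.fun_sum fun i _ => (hasDerivWithinAt_pi.mp h i).const_mul (w i)

theorem HasDerivAt.const_dotProduct (w : n → ℝ) (h : HasDerivAt u u' x) :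
    HasDerivAt (fun y => w ⬝ᵥ u y) (w ⬝ᵥ u') x :=
  HasDerivAt.fun_sum fun i _ => (hasDerivAt_pi.mp h i).const_mul (w i)

theorem HasDerivWithinAt.const_mulVec (A : Matrix m n ℝ) (h : HasDerivWithinAt u u' s x) :
    HasDerivWithinAt (fun y => A *ᵥ u y) (A *ᵥ u') s x :=
  hasDerivWithinAt_pi.mpr fun i => h.const_dotProduct (A i)

theorem HasDerivAt.const_mulVec (A : Matrix m n ℝ) (h : HasDerivAt u u' x) :
    HasDerivAt (fun y => A *ᵥ u y) (A *ᵥ u') x :=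
  hasDerivAt_pi.mpr fun i => h.const_dotProduct (A i)

theorem abs_dotProduct_le (a w : n → ℝ) : |a ⬝ᵥ w| ≤ (∑ i, |a i|) * ‖w‖ :=
  calc |a ⬝ᵥ w| ≤ ∑ i, |a i * w i| := Finset.abs_sum_le_sum_abs _ _
    _ ≤ ∑ i, |a i| * ‖w‖ := Finset.sum_le_sum fun i _ => by
      rw [abs_mul, ← Real.norm_eq_abs (w i)]
      exact mul_le_mul_of_nonneg_left (norm_le_pi_norm w i) (abs_nonneg _)
    _ = (∑ i, |a i|) * ‖w‖ := (Finset.sum_mul ..).symm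

theorem exists_norm_mulVec_le [Fintype m] (A : Matrix m n ℝ) :
    ∃ K, 0 ≤ K ∧ ∀ a, ‖A *ᵥ a‖ ≤ K * ‖a‖ :=
  ⟨‖LinearMap.toContinuousLinearMap (mulVecLin A)‖, norm_nonneg _,
    (LinearMap.toContinuousLinearMap (mulVecLin A)).le_opNorm⟩

theorem abs_dotProduct_mulVec_add_smul_le {A : Matrix n n ℝ} {K : ℝ}
    (hK : ∀ a, ‖A *ᵥ a‖ ≤ K * ‖a‖) (ρ a g : n → ℝ) (b : ℝ) :
    |ρ ⬝ᵥ (A *ᵥ a + b • g)| ≤ (∑ i, |ρ i|) * (K * ‖a‖ + |b| * ‖g‖) := by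
  refine (abs_dotProduct_le _ _).trans (mul_le_mul_of_nonneg_left ?_ (by positivity))
  calc ‖A *ᵥ a + b • g‖ ≤ ‖A *ᵥ a‖ + ‖b • g‖ := norm_add_le _ _
    _ ≤ K * ‖a‖ + |b| * ‖g‖ := by rw [norm_smul, Real.norm_eq_abs]; linarith [hK a]

end DotProduct

section Homogenization

variable {n : Type*} [Fintype n] [DecidableEq n]

theorem isUnit_det_of_eq_conj_diagonal {A X : Matrix n n ℝ} {lam : n → ℝ} (hX : IsUnit X)
    (hA : A = X⁻¹ * diagonal lam * X) (hlam : ∀ i, lam i ≠ 0) : IsUnit A.det := by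
  have hXdet := (isUnit_iff_isUnit_det X).mp hX
  rw [hA, isUnit_iff_ne_zero]
  simp [det_mul, hXdet.ne_zero, Finset.prod_ne_zero_iff, hlam]

theorem exists_bounded_vecMul_smul_one_sub_eq {A : Matrix n n ℝ} (hA : IsUnit A.det)
    (d : n → ℝ) :
    ∃ η > 0, ∃ K ≥ 0, ∀ v : ℝ, |v| < η →
      ∃ ρ : n → ℝ, ρ ᵥ* (v • 1 - A) = d ∧ ∑ i, |ρ i| ≤ K := by
  set R : ℝ → Matrix n n ℝ := fun v => v • 1 - A
  set φ : Matrix n n ℝ → ℝ := fun N => ∑ i, |(d ᵥ* N) i|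
  have hR : Continuous R := (continuous_id.smul continuous_const).sub continuous_const
  have hR0 : IsUnit (R 0).det := by
    simpa [R, det_neg] using ((isUnit_neg_one (α := ℝ)).pow (Fintype.card n)).mul hA
  have hφ : Continuous φ := continuous_finsetSum _ fun i _ =>
    continuous_abs.comp ((continuous_apply i).comp (continuous_const.matrix_vecMul continuous_id))
  have hcont : ContinuousAt (fun v => φ (R v)⁻¹) 0 :=
    hφ.continuousAt.comp ((continuousAt_matrix_inv _
      (NormedRing.inverse_continuousAt hR0.unit)).comp hR.continuousAt)
  have hev : ∀ᶠ v in nhds 0, (R v).det ≠ 0 ∧ φ (R v)⁻¹ < φ (R 0)⁻¹ + 1 :=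
    (hR.matrix_det.continuousAt.eventually_ne hR0.ne_zero).and
      (hcont.eventually_lt continuousAt_const (lt_add_one _))
  obtain ⟨η, hη, hball⟩ := Metric.eventually_nhds_iff.mp hev
  refine ⟨η, hη, φ (R 0)⁻¹ + 1, add_nonneg (Finset.sum_nonneg fun i _ => abs_nonneg _) zero_le_one,
    fun v hv => ⟨d ᵥ* (R v)⁻¹, ?_, ?_⟩⟩
  all_goals obtain ⟨hdet, hle⟩ := hball (by rwa [Real.dist_eq, sub_zero])
  · rw [vecMul_vecMul, nonsing_inv_mul _ (Ne.isUnit hdet), vecMul_one]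
  · exact hle.le

noncomputable def zerothOrderSpeed (A : Matrix n n ℝ) (c g : n → ℝ) : ℝ := -(c ⬝ᵥ A⁻¹ *ᵥ g)

theorem hasDerivWithinAt_add_corrector {A : Matrix n n ℝ} (hA : A⁻¹ * A = 1) {c g ρ : n → ℝ}
    {ε : ℝ} (hρ : ρ ᵥ* ((ε * zerothOrderSpeed A c g) • 1 - A) = c ᵥ* A⁻¹)
    {u : ℝ → n → ℝ} {b : ℝ → ℝ} {uxx : n → ℝ} {bxx : ℝ} {S : Set ℝ} {s : ℝ}
    (hu : HasDerivWithinAt u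
      ((ε * zerothOrderSpeed A c g) • uxx - (A *ᵥ uxx + bxx • g)) S s)
    (hb : HasDerivWithinAt b (ε * zerothOrderSpeed A c g * bxx - ε * (c ⬝ᵥ uxx)) S s) :
    HasDerivWithinAt (fun s => b s + ε * (ρ ⬝ᵥ (A *ᵥ u s + b s • g)))
      (-(ε ^ 2 * (c ⬝ᵥ uxx) * (ρ ⬝ᵥ g))) S s := by
  set v := ε * zerothOrderSpeed A c g with hv
  set w := A *ᵥ uxx + bxx • g
  have hres : A *ᵥ (v • uxx - w) + (v * bxx - ε * (c ⬝ᵥ uxx)) • g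
      = (v • 1 - A) *ᵥ w - (ε * (c ⬝ᵥ uxx)) • g := by
    simp only [w, sub_mulVec, smul_mulVec, one_mulVec, mulVec_sub, mulVec_smul, mulVec_add]
    module
  have hρw : ρ ⬝ᵥ ((v • 1 - A) *ᵥ w) = c ⬝ᵥ uxx + bxx * (c ⬝ᵥ A⁻¹ *ᵥ g) := by
    rw [dotProduct_mulVec, hρ, ← dotProduct_mulVec, mulVec_add, mulVec_mulVec, hA, one_mulVec,
      mulVec_smul, dotProduct_add, dotProduct_smul, smul_eq_mul]
  refine (hb.add ((((hu.const_mulVec A).add (hb.smul_const g)).const_dotProduct ρ).const_mul ε)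
    ).congr_deriv ?_
  rw [hres, dotProduct_sub, hρw, dotProduct_smul, smul_eq_mul, hv, zerothOrderSpeed]
  ring

theorem abs_Bx_sub_le_of_system {A : Matrix n n ℝ} (hA : A⁻¹ * A = 1) {c g ρ : n → ℝ}
    {ε T K₁ K₂ : ℝ} (hT : 0 < T) (hε : 0 ≤ ε)
    (hρ : ρ ᵥ* ((ε * zerothOrderSpeed A c g) • 1 - A) = c ᵥ* A⁻¹)
    {U Ux Ut Uxx Uxt : ℝ → ℝ → n → ℝ} {B Bx Bt Bxx Bxt : ℝ → ℝ → ℝ}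
    (hU : ContDiffOn ℝ 2 (fun p : ℝ × ℝ => U p.1 p.2) (univ ×ˢ Icc 0 T))
    (hB : ContDiffOn ℝ 2 (fun p : ℝ × ℝ => B p.1 p.2) (univ ×ˢ Icc 0 T))
    (hUx : ∀ x, ∀ t ∈ Icc 0 T, HasDerivAt (fun x' => U x' t) (Ux x t) x)
    (hUt : ∀ x, ∀ t ∈ Icc 0 T, HasDerivWithinAt (fun t' => U x t') (Ut x t) (Icc 0 T) t)
    (hBx : ∀ x, ∀ t ∈ Icc 0 T, HasDerivAt (fun x' => B x' t) (Bx x t) x)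
    (hBt : ∀ x, ∀ t ∈ Icc 0 T, HasDerivWithinAt (fun t' => B x t') (Bt x t) (Icc 0 T) t)
    (hUxx : ∀ x, ∀ t ∈ Icc 0 T, HasDerivAt (fun x' => Ux x' t) (Uxx x t) x)
    (hUxt : ∀ x, ∀ t ∈ Icc 0 T, HasDerivWithinAt (fun t' => Ux x t') (Uxt x t) (Icc 0 T) t)
    (hBxx : ∀ x, ∀ t ∈ Icc 0 T, HasDerivAt (fun x' => Bx x' t) (Bxx x t) x)
    (hBxt : ∀ x, ∀ t ∈ Icc 0 T, HasDerivWithinAt (fun t' => Bx x t') (Bxt x t) (Icc 0 T) t)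
    (hsys : ∀ x, ∀ t ∈ Icc 0 T,
      Ut x t + A *ᵥ Ux x t = -(Bx x t) • g ∧ Bt x t + ε * (c ⬝ᵥ Ux x t) = 0)
    (hκ : ∀ x, ∀ t ∈ Icc 0 T, |(c ⬝ᵥ Uxx x t) * (ρ ⬝ᵥ g)| ≤ K₁)
    (hW : ∀ x, ∀ t ∈ Icc 0 T, |ρ ⬝ᵥ (A *ᵥ Ux x t + Bx x t • g)| ≤ K₂)
    (x : ℝ) {t : ℝ} (ht : t ∈ Icc 0 T) :
    |Bx x t - Bx (x - ε * zerothOrderSpeed A c g * t) 0| ≤ ε ^ 2 * K₁ * t + 2 * ε * K₂ := by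
  set v := ε * zerothOrderSpeed A c g
  have hUxt_eq : ∀ y, ∀ s ∈ Icc 0 T, Uxt y s = -(A *ᵥ Uxx y s + Bxx y s • g) := by
    intro y s hs
    have h := hasDerivAt_mixed_of_contDiffOn hT hU hUx hUt hUxt (x := y) hs
    rw [show (fun x' => Ut x' s) = fun x' => -(Bx x' s) • g - A *ᵥ Ux x' s from
      funext fun x' => eq_sub_of_add_eq (hsys x' s hs).1] at h
    rw [h.unique (((hBxx y s hs).neg.smul_const g).sub ((hUxx y s hs).const_mulVec A))]
    module
  have hBxt_eq : ∀ y, ∀ s ∈ Icc 0 T, Bxt y s = -(ε * (c ⬝ᵥ Uxx y s)) := by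
    intro y s hs
    have h := hasDerivAt_mixed_of_contDiffOn hT hB hBx hBt hBxt (x := y) hs
    rw [show (fun x' => Bt x' s) = fun x' => -(ε * (c ⬝ᵥ Ux x' s)) from
      funext fun x' => eq_neg_of_add_eq_zero_left (hsys x' s hs).2] at h
    exact h.unique (((hUxx y s hs).const_dotProduct c).const_mul ε).neg
  have hder : ∀ s ∈ Icc 0 T, HasDerivWithinAt
      (fun s => Bx (x - v * t + v * s) s
        + ε * (ρ ⬝ᵥ (A *ᵥ Ux (x - v * t + v * s) s + Bx (x - v * t + v * s) s • g)))
      (-(ε ^ 2 * (c ⬝ᵥ Uxx (x - v * t + v * s) s) * (ρ ⬝ᵥ g))) (Icc 0 T) s := by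
    intro s hs
    refine hasDerivWithinAt_add_corrector (bxx := Bxx (x - v * t + v * s) s) hA hρ ?_ ?_
    · simpa only [hUxt_eq _ _ hs, sub_eq_add_neg] using
        hasDerivWithinAt_line_of_contDiffOn hT hU hUx hUt hUxx hUxt (x - v * t) v hs
    · simpa only [hBxt_eq _ _ hs, sub_eq_add_neg, smul_eq_mul] using
        hasDerivWithinAt_line_of_contDiffOn hT hB hBx hBt hBxx hBxt (x - v * t) v hs
  have hderiv_le : ∀ s ∈ Icc 0 T,
      |-(ε ^ 2 * (c ⬝ᵥ Uxx (x - v * t + v * s) s) * (ρ ⬝ᵥ g))| ≤ ε ^ 2 * K₁ := fun s hs => by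
    rw [abs_neg, mul_assoc, abs_mul, abs_of_nonneg (sq_nonneg ε)]
    exact mul_le_mul_of_nonneg_left (hκ _ _ hs) (sq_nonneg ε)
  simpa only [sub_add_cancel, mul_zero, add_zero] using
    abs_sub_le_of_hasDerivWithinAt_add_corrector hε hder hderiv_le (fun s hs => hW _ _ hs) ht

end Homogenization

theorem stmt_1_general (l : ℕ) (A X : Matrix (Fin l) (Fin l) ℝ) (lam : Fin l → ℝ)
    (g c : Fin l → ℝ) (δ : ℝ) (hδ : 0 < δ)
    (hX : IsUnit X) (hA : A = X⁻¹ * Matrix.diagonal lam * X)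
    (hlam : ∀ i : Fin l, δ ≤ |lam i|)
    (M T₀ : ℝ) (hM : 0 < M) (hT₀ : 0 < T₀) :
    ∃ C > 0, ∃ ε₀ > 0, ∀ ε : ℝ, 0 < ε → ε ≤ ε₀ →
      ∀ (U : ℝ → ℝ → Fin l → ℝ) (B : ℝ → ℝ → ℝ)
        (Ux Ut Uxx Uxt Utt : ℝ → ℝ → Fin l → ℝ)
        (Bx Bt Bxx Bxt Btt : ℝ → ℝ → ℝ),
        -- (U, B) is a C² classical solution on ℝ × [0, T₀/ε]
        (∀ x : ℝ, ∀ t ∈ Icc (0 : ℝ) (T₀ / ε),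
          HasDerivAt (fun x' => U x' t) (Ux x t) x ∧
          HasDerivWithinAt (fun t' => U x t') (Ut x t) (Icc 0 (T₀ / ε)) t ∧
          HasDerivAt (fun x' => B x' t) (Bx x t) x ∧
          HasDerivWithinAt (fun t' => B x t') (Bt x t) (Icc 0 (T₀ / ε)) t) →
        (∀ x : ℝ, ∀ t ∈ Icc (0 : ℝ) (T₀ / ε),
          HasDerivAt (fun x' => Ux x' t) (Uxx x t) x ∧
          HasDerivWithinAt (fun t' => Ux x t') (Uxt x t) (Icc 0 (T₀ / ε)) t ∧
          HasDerivWithinAt (fun t' => Ut x t') (Utt x t) (Icc 0 (T₀ / ε)) t ∧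
          HasDerivAt (fun x' => Bx x' t) (Bxx x t) x ∧
          HasDerivWithinAt (fun t' => Bx x t') (Bxt x t) (Icc 0 (T₀ / ε)) t ∧
          HasDerivWithinAt (fun t' => Bt x t') (Btt x t) (Icc 0 (T₀ / ε)) t) →
        -- joint C² regularity of the solution on ℝ × [0, T₀/ε]
        ContDiffOn ℝ 2 (fun p : ℝ × ℝ => U p.1 p.2)
          (univ ×ˢ Icc (0:ℝ) (T₀ / ε)) →
        ContDiffOn ℝ 2 (fun p : ℝ × ℝ => B p.1 p.2)
          (univ ×ˢ Icc (0:ℝ) (T₀ / ε)) →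
        -- boundedness of the solution
        (∃ K : ℝ, ∀ x : ℝ, ∀ t ∈ Icc (0 : ℝ) (T₀ / ε),
          ‖U x t‖ ≤ K ∧ |B x t| ≤ K) →
        -- partial derivatives up to order two bounded by M
        (∀ x : ℝ, ∀ t ∈ Icc (0 : ℝ) (T₀ / ε),
          ‖Ux x t‖ ≤ M ∧ ‖Ut x t‖ ≤ M ∧ ‖Uxx x t‖ ≤ M ∧ ‖Uxt x t‖ ≤ M ∧
          ‖Utt x t‖ ≤ M ∧ |Bx x t| ≤ M ∧ |Bt x t| ≤ M ∧ |Bxx x t| ≤ M ∧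
          |Bxt x t| ≤ M ∧ |Btt x t| ≤ M) →
        -- the linear hyperbolic system
        (∀ x : ℝ, ∀ t ∈ Icc (0 : ℝ) (T₀ / ε),
          Ut x t + A.mulVec (Ux x t) = -(Bx x t) • g ∧
          Bt x t + ε * (c ⬝ᵥ Ux x t) = 0) →
        -- (i) approximate steadiness of the initial data
        (∀ x : ℝ, ‖A.mulVec (Ux x 0) + Bx x 0 • g‖ ≤ M * ε) →
        -- (ii) approximate steadiness of the initial data, second order
        (∀ x : ℝ, ‖A.mulVec (Uxx x 0) + Bxx x 0 • g‖ ≤ M * ε) →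
        -- (iii) B₀ = B(·,0) ∈ W^{2,∞}(ℝ) with norm ≤ M
        (∀ x : ℝ, |B x 0| ≤ M ∧ |Bx x 0| ≤ M ∧ |Bxx x 0| ≤ M) →
        ∀ x : ℝ, ∀ t ∈ Icc (0 : ℝ) (T₀ / ε),
          |Bx x t - Bx (x - -(c ⬝ᵥ A⁻¹.mulVec g) * ε * t) 0| ≤ C * ε := by
  have hAdet := isUnit_det_of_eq_conj_diagonal hX hA fun i => abs_pos.mp (hδ.trans_le (hlam i))
  obtain ⟨η, hη, K, hK0, hK⟩ := exists_bounded_vecMul_smul_one_sub_eq hAdet (c ᵥ* A⁻¹)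
  obtain ⟨KA, hKA0, hKA⟩ := exists_norm_mulVec_le A
  set v₀ := zerothOrderSpeed A c g
  set K₁ := (∑ i, |c i|) * M * (K * ‖g‖)
  set K₂ := K * (KA * M + M * ‖g‖)
  refine ⟨T₀ * K₁ + 2 * K₂ + 1, by positivity, η / (|v₀| + 1), by positivity, ?_⟩
  intro ε hε hεε₀ U B Ux Ut Uxx Uxt Utt Bx Bt Bxx Bxt Btt hreg1 hreg2 hUC2 hBC2 _ hbd hsys _ _ _
    x t ht
  obtain ⟨ρ, hρ, hρK⟩ := hK (ε * v₀) <| calc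
    |ε * v₀| < ε * (|v₀| + 1) := by rw [abs_mul, abs_of_pos hε]; gcongr; exact lt_add_one _
    _ ≤ η := (le_div_iff₀ (by positivity)).mp hεε₀
  have hκ : ∀ x, ∀ t ∈ Icc 0 (T₀ / ε), |(c ⬝ᵥ Uxx x t) * (ρ ⬝ᵥ g)| ≤ K₁ := fun x t ht => by
    rw [abs_mul]
    exact mul_le_mul ((abs_dotProduct_le c _).trans (by gcongr; exact (hbd x t ht).2.2.1))
      ((abs_dotProduct_le ρ g).trans (by gcongr)) (abs_nonneg _) (by positivity)
  have hW : ∀ x, ∀ t ∈ Icc 0 (T₀ / ε), |ρ ⬝ᵥ (A *ᵥ Ux x t + Bx x t • g)| ≤ K₂ := fun x t ht => by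
    obtain ⟨hUx, -, -, -, -, hBx, -⟩ := hbd x t ht
    refine (abs_dotProduct_mulVec_add_smul_le hKA ρ _ g _).trans ?_
    show _ ≤ K * (KA * M + M * ‖g‖)
    gcongr
  have key := abs_Bx_sub_le_of_system (nonsing_inv_mul A hAdet) (div_pos hT₀ hε) hε.le hρ
    hUC2 hBC2 (fun x t ht => (hreg1 x t ht).1) (fun x t ht => (hreg1 x t ht).2.1)
    (fun x t ht => (hreg1 x t ht).2.2.1) (fun x t ht => (hreg1 x t ht).2.2.2)
    (fun x t ht => (hreg2 x t ht).1) (fun x t ht => (hreg2 x t ht).2.1)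
    (fun x t ht => (hreg2 x t ht).2.2.2.1) (fun x t ht => (hreg2 x t ht).2.2.2.2.1)
    hsys hκ hW x ht
  have hεt : ε * t ≤ T₀ := by rw [mul_comm]; exact (le_div_iff₀ hε).mp ht.2
  rw [show -(c ⬝ᵥ A⁻¹ *ᵥ g) * ε * t = ε * v₀ * t by simp only [v₀, zerothOrderSpeed]; ring]
  calc _ ≤ ε ^ 2 * K₁ * t + 2 * ε * K₂ := key
    _ = ε * K₁ * (ε * t) + 2 * ε * K₂ := by ring
    _ ≤ ε * K₁ * T₀ + 2 * ε * K₂ := by gcongr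
    _ ≤ (T₀ * K₁ + 2 * K₂ + 1) * ε := by linarith

/-- Zeroth order homogenization of the derivative (Lemma 1, second part) for
the linear system `U_t + A U_x = −g B_x`, `B_t + ε cᵀ U_x = 0`, with
`A = X⁻¹ Λ X`, `Λ` real diagonal with pairwise distinct eigenvalues of
modulus at least `δ > 0`.  For all `M, T₀ > 0` there are `C, ε₀ > 0`,
depending only on the data, such that for every `ε ∈ (0, ε₀]` and every
bounded `C²` solution on `ℝ × [0, T₀/ε]` with derivatives up to order two
bounded by `M`, initial conditions
`|A U_x(·,0) + g B_x(·,0)| ≤ M ε`, `|A U_{xx}(·,0) + g B_{xx}(·,0)| ≤ M ε`,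
and `B₀ = B(·,0) ∈ W^{2,∞}` with norm at most `M`, the spatial derivative of
the riverbed stays within `C ε` of `B₀′(x − λ_B⁰ ε t)`, `λ_B⁰ = −cᵀ A⁻¹ g`,
for all `t ∈ [0, T₀/ε]`. -/
theorem stmt_1 (l : ℕ) (A X : Matrix (Fin l) (Fin l) ℝ) (lam : Fin l → ℝ)
    (g c : Fin l → ℝ) (δ : ℝ) (hδ : 0 < δ)
    (hX : IsUnit X) (hA : A = X⁻¹ * Matrix.diagonal lam * X)
    (hdistinct : ∀ i j : Fin l, i ≠ j → lam i ≠ lam j)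
    (hlam : ∀ i : Fin l, δ ≤ |lam i|)
    (M T₀ : ℝ) (hM : 0 < M) (hT₀ : 0 < T₀) :
    ∃ C > 0, ∃ ε₀ > 0, ∀ ε : ℝ, 0 < ε → ε ≤ ε₀ →
      ∀ (U : ℝ → ℝ → Fin l → ℝ) (B : ℝ → ℝ → ℝ)
        (Ux Ut Uxx Uxt Utt : ℝ → ℝ → Fin l → ℝ)
        (Bx Bt Bxx Bxt Btt : ℝ → ℝ → ℝ),
        -- (U, B) is a C² classical solution on ℝ × [0, T₀/ε]
        (∀ x : ℝ, ∀ t ∈ Icc (0 : ℝ) (T₀ / ε),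
          HasDerivAt (fun x' => U x' t) (Ux x t) x ∧
          HasDerivWithinAt (fun t' => U x t') (Ut x t) (Icc 0 (T₀ / ε)) t ∧
          HasDerivAt (fun x' => B x' t) (Bx x t) x ∧
          HasDerivWithinAt (fun t' => B x t') (Bt x t) (Icc 0 (T₀ / ε)) t) →
        (∀ x : ℝ, ∀ t ∈ Icc (0 : ℝ) (T₀ / ε),
          HasDerivAt (fun x' => Ux x' t) (Uxx x t) x ∧
          HasDerivWithinAt (fun t' => Ux x t') (Uxt x t) (Icc 0 (T₀ / ε)) t ∧
          HasDerivWithinAt (fun t' => Ut x t') (Utt x t) (Icc 0 (T₀ / ε)) t ∧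
          HasDerivAt (fun x' => Bx x' t) (Bxx x t) x ∧
          HasDerivWithinAt (fun t' => Bx x t') (Bxt x t) (Icc 0 (T₀ / ε)) t ∧
          HasDerivWithinAt (fun t' => Bt x t') (Btt x t) (Icc 0 (T₀ / ε)) t) →
        -- joint C² regularity of the solution on ℝ × [0, T₀/ε]
        ContDiffOn ℝ 2 (fun p : ℝ × ℝ => U p.1 p.2)
          (univ ×ˢ Icc (0:ℝ) (T₀ / ε)) →
        ContDiffOn ℝ 2 (fun p : ℝ × ℝ => B p.1 p.2)
          (univ ×ˢ Icc (0:ℝ) (T₀ / ε)) →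
        -- boundedness of the solution
        (∃ K : ℝ, ∀ x : ℝ, ∀ t ∈ Icc (0 : ℝ) (T₀ / ε),
          ‖U x t‖ ≤ K ∧ |B x t| ≤ K) →
        -- partial derivatives up to order two bounded by M
        (∀ x : ℝ, ∀ t ∈ Icc (0 : ℝ) (T₀ / ε),
          ‖Ux x t‖ ≤ M ∧ ‖Ut x t‖ ≤ M ∧ ‖Uxx x t‖ ≤ M ∧ ‖Uxt x t‖ ≤ M ∧
          ‖Utt x t‖ ≤ M ∧ |Bx x t| ≤ M ∧ |Bt x t| ≤ M ∧ |Bxx x t| ≤ M ∧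
          |Bxt x t| ≤ M ∧ |Btt x t| ≤ M) →
        -- the linear hyperbolic system
        (∀ x : ℝ, ∀ t ∈ Icc (0 : ℝ) (T₀ / ε),
          Ut x t + A.mulVec (Ux x t) = -(Bx x t) • g ∧
          Bt x t + ε * (c ⬝ᵥ Ux x t) = 0) →
        -- (i) approximate steadiness of the initial data
        (∀ x : ℝ, ‖A.mulVec (Ux x 0) + Bx x 0 • g‖ ≤ M * ε) →
        -- (ii) approximate steadiness of the initial data, second order
        (∀ x : ℝ, ‖A.mulVec (Uxx x 0) + Bxx x 0 • g‖ ≤ M * ε) →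
        -- (iii) B₀ = B(·,0) ∈ W^{2,∞}(ℝ) with norm ≤ M
        (∀ x : ℝ, |B x 0| ≤ M ∧ |Bx x 0| ≤ M ∧ |Bxx x 0| ≤ M) →
        ∀ x : ℝ, ∀ t ∈ Icc (0 : ℝ) (T₀ / ε),
          |Bx x t - Bx (x - -(c ⬝ᵥ A⁻¹.mulVec g) * ε * t) 0| ≤ C * ε :=
  stmt_1_general l A X lam g c δ hδ hX hA hlam M T₀ hM hT₀
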